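/- Let n ≥ 0 and i ≥ 0 be integers and let A be a nonempty set of leaves. Then for every leaf configuration on the event { ∇^A 1_{{X(e_n)=i}} ≠ 0 }, one has Θ^A X(e_n) = Σ_{v ∈ L_{e_n,A}} X(v) + Σ_{u ∈ A} X_0^*(u) − |O_{e_n,A}|. -/

import Mathlib

/-!
On the event `∇^A 1_{X(e_n)=i} ≠ 0`, the children of every spine vertex `o ∈ O_{e_n,A}` have
`Θ^A X`-values summing to at least one. Otherwise `Θ^A X(o) = 0`, hence `Θ^B X(o) = 0` for all
`B ⊆ A` by monotonicity; since `o` lies above some `v ∈ A` and the configurations `Θ^B X` and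
`Θ^{B ∪ {v}} X` differ only at `v`, they have the same root value, and the alternating sum
defining `∇^A` cancels in pairs. With no truncation active on the spine, summing
`X(o) = ∑ (children of o) - 1` over `o ∈ O_{e_n,A}` telescopes: the children of the spine are
the spine minus the root, the leaves in `A`, and the side vertices `L_{e_n,A}`.
-/

noncomputable section

/-- Root value of the depth-`n` `m`-ary tree from leaf values, via
`X(w) = (X(1w) + ⋯ + X(mw) - 1)⁺` (root branches by the last letter of a leaf word). -/
def rootVal (m : ℕ) : (n : ℕ) → ((Fin n → Fin m) → ℕ) → ℕ
  | 0, f => f Fin.elim0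
  | n + 1, f => (∑ a : Fin m, rootVal m n (fun w => f (Fin.snoc w a))) - 1

/-- Value at the vertex given by a word `w` of length `ℓ ≤ n` (a suffix of leaf words). -/
def vertexVal (m n ℓ : ℕ) (hℓ : ℓ ≤ n) (f : (Fin n → Fin m) → ℕ)
    (w : Fin ℓ → Fin m) : ℕ :=
  rootVal m (n - ℓ) (fun u => f (fun i =>
    if h : (i : ℕ) < n - ℓ then u ⟨i, h⟩
    else w ⟨(i : ℕ) - (n - ℓ), by have := i.2; omega⟩))

/-- Words over `{1,…,m}` of length at most `n` (the vertices of the tree). -/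
abbrev Word (m n : ℕ) := Σ ℓ : Fin (n + 1), Fin (ℓ : ℕ) → Fin m

/-- Value at the vertex given by a word. -/
def wordVal {m n : ℕ} (f : (Fin n → Fin m) → ℕ) (w : Word m n) : ℕ :=
  vertexVal m n (w.1 : ℕ) (Nat.lt_succ_iff.mp w.1.2) f w.2

/-- `v_i`: the word obtained from the leaf word `v` by deleting its first `i` letters. -/
def wordDrop {m n : ℕ} (v : Fin n → Fin m) (i : ℕ) : Word m n :=
  ⟨⟨n - i, Nat.lt_succ_of_le (Nat.sub_le n i)⟩,
    fun j => v ⟨i + (j : ℕ), by have h2 : (j : ℕ) < n - i := j.2; omega⟩⟩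

/-- A leaf, seen as a word of length `n`. -/
def leafWord {m n : ℕ} (v : Fin n → Fin m) : Word m n := ⟨Fin.last n, v⟩

/-- `w = a·o` for some letter `a`: `w` is a parent of `o` (one more letter in front). -/
def isCons {m n : ℕ} (w o : Word m n) : Prop :=
  (w.1 : ℕ) = (o.1 : ℕ) + 1 ∧
    ∀ j : Fin (o.1 : ℕ), ∀ h : (j : ℕ) + 1 < (w.1 : ℕ), o.2 j = w.2 ⟨(j : ℕ) + 1, h⟩

open scoped Classical in
/-- `O_{e_n,A} = {v_i : v ∈ A, 1 ≤ i ≤ n}`. -/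
def spineSet {m n : ℕ} (A : Finset (Fin n → Fin m)) : Finset (Word m n) :=
  (A ×ˢ Finset.Icc 1 n).image (fun q => wordDrop q.1 q.2)

open scoped Classical in
/-- `L_{e_n,A} = {a·w : w ∈ O_{e_n,A}, a ∈ {1,…,m}} \ (O_{e_n,A} ∪ A)`. -/
def sideSet {m n : ℕ} (A : Finset (Fin n → Fin m)) : Finset (Word m n) :=
  Finset.univ.filter (fun w : Word m n =>
    (∃ o ∈ spineSet A, isCons w o) ∧ w ∉ spineSet A ∧ ∀ v ∈ A, w ≠ leafWord v)

/-- `Θ^B X`: leaf configuration equal to `X(v) = X_0^*(v)·u(v)` off `B` and to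
`X_0^*(v)` on `B`. -/
def thetaCfg {m n : ℕ} (Xs : (Fin n → Fin m) → ℕ) (u : (Fin n → Fin m) → Bool)
    (B : Finset (Fin n → Fin m)) : (Fin n → Fin m) → ℕ :=
  fun v => if v ∈ B then Xs v else (if u v then Xs v else 0)

/-- `∇^A f(X) = Σ_{B ⊆ A} (-1)^{|A|-|B|} f(Θ^B X)`. -/
def nablaCfg {m n : ℕ} (Xs : (Fin n → Fin m) → ℕ) (u : (Fin n → Fin m) → Bool)
    (A : Finset (Fin n → Fin m)) (f : ((Fin n → Fin m) → ℕ) → ℝ) : ℝ :=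
  ∑ B ∈ A.powerset, (-1 : ℝ) ^ (A.card - B.card) * f (thetaCfg Xs u B)


variable {m n : ℕ}

theorem rootVal_mono :
    ∀ {n : ℕ} {f g : (Fin n → Fin m) → ℕ}, f ≤ g → rootVal m n f ≤ rootVal m n g
  | 0, _, _, h => h _
  | _ + 1, _, _, h =>
    Nat.sub_le_sub_right (Finset.sum_le_sum fun _ _ => rootVal_mono fun _ => h _) 1

theorem rootVal_cast {k k' : ℕ} (h : k = k') (f : (Fin k → Fin m) → ℕ) :
    rootVal m k f = rootVal m k' (fun u => f (u ∘ Fin.cast h)) := by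
  subst h
  rfl

theorem vertexVal_zero (f : (Fin n → Fin m) → ℕ) (w : Fin 0 → Fin m) :
    vertexVal m n 0 n.zero_le f w = rootVal m n f := by
  simp [vertexVal]

theorem vertexVal_self (f : (Fin n → Fin m) → ℕ) (v : Fin n → Fin m) :
    vertexVal m n n le_rfl f v = f v := by
  have depth_zero : ∀ k, k = 0 → rootVal m k (fun _ => f v) = f v := by rintro _ rfl; rfl
  simpa [vertexVal] using depth_zero _ (Nat.sub_self n)

theorem vertexVal_mono {ℓ : ℕ} (hℓ : ℓ ≤ n) {f g : (Fin n → Fin m) → ℕ} (h : f ≤ g)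
    (w : Fin ℓ → Fin m) : vertexVal m n ℓ hℓ f w ≤ vertexVal m n ℓ hℓ g w :=
  rootVal_mono fun _ => h _

theorem vertexVal_eq_sum_cons {ℓ : ℕ} (hℓ : ℓ < n) (f : (Fin n → Fin m) → ℕ)
    (w : Fin ℓ → Fin m) :
    vertexVal m n ℓ hℓ.le f w = (∑ a, vertexVal m n (ℓ + 1) hℓ f (Fin.cons a w)) - 1 := by
  unfold vertexVal
  rw [rootVal_cast (show n - ℓ = n - (ℓ + 1) + 1 by omega), rootVal]
  congr 1
  refine Finset.sum_congr rfl fun a _ =>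
    congrArg _ (funext fun u => congrArg f (funext fun i => ?_))
  rcases lt_trichotomy (i : ℕ) (n - (ℓ + 1)) with hi | hi | hi
  · simp [hi, show (i : ℕ) < n - ℓ by omega, Fin.snoc]
  · simp [hi, show n - (ℓ + 1) < n - ℓ by omega, Fin.snoc]
  · have hj : (i : ℕ) - (n - (ℓ + 1)) = (i - (n - ℓ)) + 1 := by omega
    simp only [show ¬ (i : ℕ) < n - ℓ by omega, show ¬ (i : ℕ) < n - (ℓ + 1) by omega,
      dite_false, hj]
    exact (Fin.cons_succ (α := fun _ => Fin m) a w ⟨_, by omega⟩).symm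

/-- `IsSuffix w v` encodes that the leaf `v` lies in the subtree of the vertex `w`. -/
def IsSuffix {ℓ : ℕ} (w : Fin ℓ → Fin m) (v : Fin n → Fin m) : Prop :=
  ∀ (i : Fin n) (j : Fin ℓ), (i : ℕ) = n - ℓ + j → v i = w j

theorem IsSuffix.tail {ℓ : ℕ} (hℓ : ℓ < n) {w : Fin (ℓ + 1) → Fin m} {v : Fin n → Fin m}
    (h : IsSuffix w v) : IsSuffix (Fin.tail w) v :=
  fun i j hij => h i j.succ (by rw [Fin.val_succ]; omega)

theorem IsSuffix.eq {ℓ : ℕ} (hℓ : ℓ ≤ n) {w w' : Fin ℓ → Fin m} {v : Fin n → Fin m}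
    (h : IsSuffix w v) (h' : IsSuffix w' v) : w = w' :=
  funext fun j => (h ⟨n - ℓ + j, by omega⟩ j rfl).symm.trans (h' _ j rfl)

theorem vertexVal_congr {ℓ : ℕ} (hℓ : ℓ ≤ n) {f g : (Fin n → Fin m) → ℕ} (w : Fin ℓ → Fin m)
    (h : ∀ v, IsSuffix w v → f v = g v) : vertexVal m n ℓ hℓ f w = vertexVal m n ℓ hℓ g w := by
  unfold vertexVal
  congr 1
  funext u
  refine h _ fun i j hij => ?_
  simp only [show ¬ (i : ℕ) < n - ℓ by omega, dite_false]
  congr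
  omega

theorem rootVal_eq_of_vertexVal_eq : ∀ {ℓ : ℕ} (hℓ : ℓ ≤ n) (w : Fin ℓ → Fin m)
    {f g : (Fin n → Fin m) → ℕ}, (∀ v, ¬ IsSuffix w v → f v = g v) →
    vertexVal m n ℓ hℓ f w = vertexVal m n ℓ hℓ g w → rootVal m n f = rootVal m n g
  | 0, _, w, f, g, _, hw => by rwa [vertexVal_zero, vertexVal_zero] at hw
  | ℓ + 1, hℓ, w, f, g, hout, hw => by
    refine rootVal_eq_of_vertexVal_eq (Nat.le_of_succ_le hℓ) (Fin.tail w)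
      (fun v hv => hout v fun hsuf => hv (hsuf.tail hℓ)) ?_
    rw [vertexVal_eq_sum_cons hℓ, vertexVal_eq_sum_cons hℓ]
    congr 1
    refine Finset.sum_congr rfl fun a _ => ?_
    by_cases ha : a = w 0
    · rwa [ha, Fin.cons_self_tail]
    · refine vertexVal_congr hℓ _ fun v hv => hout v fun hsuf => ha ?_
      simpa using congrFun (hv.eq hℓ hsuf) 0

namespace Word

theorem ext {w w' : Word m n} (hlen : (w.1 : ℕ) = w'.1)
    (hlet : ∀ j (hj : j < (w.1 : ℕ)) (hj' : j < (w'.1 : ℕ)), w.2 ⟨j, hj⟩ = w'.2 ⟨j, hj'⟩) :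
    w = w' := by
  obtain ⟨⟨ℓ, hℓ⟩, x⟩ := w
  obtain ⟨⟨ℓ', hℓ'⟩, x'⟩ := w'
  obtain rfl : ℓ = ℓ' := hlen
  obtain rfl : x = x' := funext fun j => hlet j j.2 j.2
  rfl

def root : Word m n := ⟨0, Fin.elim0⟩

def cons (a : Fin m) (o : Word m n) (h : (o.1 : ℕ) < n) : Word m n :=
  ⟨⟨o.1 + 1, by omega⟩, Fin.cons a o.2⟩

theorem cons_left_injective (o : Word m n) (h : (o.1 : ℕ) < n) :
    Function.Injective (cons · o h) := by
  intro a b e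
  simpa [cons] using e

theorem isCons_cons (a : Fin m) (o : Word m n) (h : (o.1 : ℕ) < n) : isCons (cons a o h) o :=
  ⟨rfl, fun j _ => (Fin.cons_succ (α := fun _ => Fin m) a o.2 j).symm⟩

theorem eq_cons_of_isCons {w o : Word m n} (hc : isCons w o) (h : (o.1 : ℕ) < n) :
    w = cons (w.2 ⟨0, by have := hc.1; omega⟩) o h := by
  refine ext hc.1 fun j hj _ => ?_
  cases j with
  | zero => rfl
  | succ j => exact (hc.2 ⟨j, by have := hc.1; omega⟩ hj).symm

theorem isCons_unique {w o o' : Word m n} (hc : isCons w o) (hc' : isCons w o') : o = o' := by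
  have := hc.1
  have := hc'.1
  exact ext (by omega) fun j hj hj' =>
    (hc.2 ⟨j, hj⟩ (by omega)).trans (hc'.2 ⟨j, hj'⟩ (by omega)).symm

open scoped Classical in
def children (o : Word m n) : Finset (Word m n) :=
  Finset.univ.filter (isCons · o)

theorem mem_children {w o : Word m n} : w ∈ o.children ↔ isCons w o := by
  simp [children]

theorem children_eq_image {o : Word m n} (h : (o.1 : ℕ) < n) :
    children o = Finset.univ.image (cons · o h) := by
  ext w
  simp only [mem_children, Finset.mem_image, Finset.mem_univ, true_and]
  exact ⟨fun hc => ⟨_, (eq_cons_of_isCons hc h).symm⟩,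
    by rintro ⟨a, rfl⟩; exact isCons_cons a o h⟩

end Word

theorem wordVal_root (f : (Fin n → Fin m) → ℕ) :
    wordVal f (Word.root : Word m n) = rootVal m n f :=
  vertexVal_zero f _

theorem wordVal_leafWord (f : (Fin n → Fin m) → ℕ) (v : Fin n → Fin m) :
    wordVal f (leafWord v) = f v :=
  vertexVal_self f v

theorem wordVal_eq_sum_children (f : (Fin n → Fin m) → ℕ) {o : Word m n} (h : (o.1 : ℕ) < n) :
    wordVal f o = (∑ w ∈ o.children, wordVal f w) - 1 := by
  rw [Word.children_eq_image h, Finset.sum_image fun a _ b _ e => Word.cons_left_injective o h e]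
  exact vertexVal_eq_sum_cons h f o.2

theorem pairwiseDisjoint_children (s : Finset (Word m n)) :
    (s : Set (Word m n)).PairwiseDisjoint Word.children := by
  intro o _ o' _ hne
  exact Finset.disjoint_left.mpr fun w hw hw' =>
    hne (Word.isCons_unique (Word.mem_children.mp hw) (Word.mem_children.mp hw'))

theorem wordDrop_zero (v : Fin n → Fin m) : wordDrop v 0 = leafWord v :=
  Word.ext (by simp [wordDrop, leafWord]) fun j _ _ => by simp [wordDrop, leafWord]

theorem wordDrop_self (v : Fin n → Fin m) : wordDrop v n = Word.root :=
  Word.ext (by simp [wordDrop, Word.root]) fun j hj _ => by simp [wordDrop] at hj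

theorem isCons_wordDrop_succ (v : Fin n → Fin m) {k : ℕ} (hk : k < n) :
    isCons (wordDrop v k) (wordDrop v (k + 1)) :=
  ⟨show n - k = n - (k + 1) + 1 by omega, fun j _ => congrArg v (Fin.ext (by simp only; omega))⟩

theorem isSuffix_wordDrop (v : Fin n → Fin m) (k : ℕ) : IsSuffix (wordDrop v k).2 v :=
  fun i j hij => congrArg v <| Fin.ext <| by
    have : (j : ℕ) < n - k := j.2
    simp only [wordDrop] at hij ⊢
    omega

theorem wordDrop_eq_of_isSuffix {w : Word m n} {v : Fin n → Fin m} (h : IsSuffix w.2 v) :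
    wordDrop v (n - w.1) = w :=
  Word.ext (show n - (n - w.1) = w.1 by omega) fun j _ hj => h _ ⟨j, hj⟩ rfl

section Paths

variable {A : Finset (Fin n → Fin m)}

theorem mem_spineSet {o : Word m n} :
    o ∈ spineSet A ↔ ∃ v ∈ A, ∃ k, 1 ≤ k ∧ k ≤ n ∧ wordDrop v k = o := by
  simp [spineSet, and_assoc]

theorem length_lt_of_mem_spineSet {o : Word m n} (ho : o ∈ spineSet A) : (o.1 : ℕ) < n := by
  obtain ⟨v, -, k, hk, hkn, rfl⟩ := mem_spineSet.mp ho
  show n - k < n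
  omega

/-- `O_{e_n,A} ∪ A`: the vertices on the paths from the leaves in `A` to the root. -/
def pathSet (A : Finset (Fin n → Fin m)) : Finset (Word m n) :=
  spineSet A ∪ A.image leafWord

theorem mem_pathSet {w : Word m n} : w ∈ pathSet A ↔ ∃ v ∈ A, ∃ k ≤ n, wordDrop v k = w := by
  simp only [pathSet, Finset.mem_union, mem_spineSet, Finset.mem_image]
  constructor
  · rintro (⟨v, hv, k, -, hk, rfl⟩ | ⟨v, hv, rfl⟩)
    exacts [⟨v, hv, k, hk, rfl⟩, ⟨v, hv, 0, n.zero_le, wordDrop_zero v⟩]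
  · rintro ⟨v, hv, k, hk, rfl⟩
    rcases k.eq_zero_or_pos with rfl | hk0
    exacts [Or.inr ⟨v, hv, (wordDrop_zero v).symm⟩, Or.inl ⟨v, hv, k, hk0, hk, rfl⟩]

theorem mem_sideSet {w : Word m n} :
    w ∈ sideSet A ↔ (∃ o ∈ spineSet A, isCons w o) ∧ w ∉ pathSet A := by
  simp [sideSet, pathSet, eq_comm]

theorem disjoint_spineSet_image_leafWord : Disjoint (spineSet A) (A.image leafWord) := by
  refine Finset.disjoint_right.mpr ?_
  rintro _ h hspine
  obtain ⟨v, -, rfl⟩ := Finset.mem_image.mp h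
  simpa [leafWord] using length_lt_of_mem_spineSet hspine

theorem disjoint_pathSet_sideSet : Disjoint (pathSet A) (sideSet A) :=
  Finset.disjoint_right.mpr fun _ hw => (mem_sideSet.mp hw).2

theorem root_notMem_biUnion_children (s : Finset (Word m n)) :
    Word.root ∉ s.biUnion Word.children := by
  simp only [Finset.mem_biUnion, Word.mem_children, not_exists, not_and]
  intro o _ hc
  simpa [Word.root] using hc.1

theorem insert_root_biUnion_children (hA : A.Nonempty) :
    insert Word.root ((spineSet A).biUnion Word.children) = pathSet A ∪ sideSet A := by
  ext w
  simp only [Finset.mem_insert, Finset.mem_biUnion, Word.mem_children, Finset.mem_union]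
  constructor
  · rintro (rfl | hchild)
    · obtain ⟨v, hv⟩ := hA
      exact Or.inl (mem_pathSet.mpr ⟨v, hv, n, le_rfl, wordDrop_self v⟩)
    · by_cases hw : w ∈ pathSet A
      exacts [Or.inl hw, Or.inr (mem_sideSet.mpr ⟨hchild, hw⟩)]
  · rintro (hw | hw)
    · obtain ⟨v, hv, k, hk, rfl⟩ := mem_pathSet.mp hw
      rcases hk.lt_or_eq with hk | rfl
      · exact Or.inr ⟨_, mem_spineSet.mpr ⟨v, hv, k + 1, by omega, hk, rfl⟩,
          isCons_wordDrop_succ v hk⟩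
      · exact Or.inl (wordDrop_self v)
    · exact Or.inr (mem_sideSet.mp hw).1

theorem leafWord_injective : Function.Injective (leafWord : (Fin n → Fin m) → Word m n) := by
  intro v v' e
  simpa [leafWord] using e

theorem rootVal_eq_of_one_le_sum_children (hA : A.Nonempty) (g : (Fin n → Fin m) → ℕ)
    (H : ∀ o ∈ spineSet A, 1 ≤ ∑ w ∈ o.children, wordVal g w) :
    (rootVal m n g : ℤ) = (∑ w ∈ sideSet A, (wordVal g w : ℤ)) + (∑ v ∈ A, (g v : ℤ)) -
      (spineSet A).card := by
  have hchildren : ∑ w ∈ (spineSet A).biUnion Word.children, (wordVal g w : ℤ) =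
      ∑ o ∈ spineSet A, (wordVal g o : ℤ) + (spineSet A).card := by
    rw [Finset.sum_biUnion (pairwiseDisjoint_children _), Finset.card_eq_sum_ones, Nat.cast_sum,
      ← Finset.sum_add_distrib]
    refine Finset.sum_congr rfl fun o ho => ?_
    rw [wordVal_eq_sum_children g (length_lt_of_mem_spineSet ho), Nat.cast_sub (H o ho)]
    push_cast
    ring
  have hpartition :=
    congrArg (fun s => ∑ w ∈ s, (wordVal g w : ℤ)) (insert_root_biUnion_children hA)
  rw [Finset.sum_insert (root_notMem_biUnion_children _),
    Finset.sum_union disjoint_pathSet_sideSet, pathSet,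
    Finset.sum_union disjoint_spineSet_image_leafWord,
    Finset.sum_image fun v _ v' _ e => leafWord_injective e, wordVal_root] at hpartition
  simp only [wordVal_leafWord] at hpartition
  linarith

end Paths

theorem sum_powerset_neg_one_pow_card_sub_mul_eq_zero {α R : Type*} [DecidableEq α] [CommRing R]
    {A : Finset α} {v : α} (hv : v ∈ A) (F : Finset α → R)
    (hF : ∀ B ⊆ A.erase v, F (insert v B) = F B) :
    ∑ B ∈ A.powerset, (-1 : R) ^ (A.card - B.card) * F B = 0 := by
  rw [← Finset.insert_erase hv, Finset.sum_powerset_insert (Finset.notMem_erase v A),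
    ← Finset.sum_add_distrib]
  refine Finset.sum_eq_zero fun B hB => ?_
  rw [Finset.mem_powerset] at hB
  have hcard := Finset.card_le_card hB
  rw [hF B hB, Finset.card_insert_of_notMem (Finset.notMem_erase v A),
    Finset.card_insert_of_notMem fun h => Finset.notMem_erase v A (hB h),
    show (A.erase v).card + 1 - B.card = (A.erase v).card - B.card + 1 by omega,
    Nat.add_sub_add_right, pow_succ]
  ring

section Theta

variable {Xs : (Fin n → Fin m) → ℕ} {u : (Fin n → Fin m) → Bool}

theorem thetaCfg_of_mem {B : Finset (Fin n → Fin m)} {v : Fin n → Fin m} (hv : v ∈ B) :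
    thetaCfg Xs u B v = Xs v :=
  if_pos hv

theorem thetaCfg_mono {B B' : Finset (Fin n → Fin m)} (h : B ⊆ B') :
    thetaCfg Xs u B ≤ thetaCfg Xs u B' := by
  intro v
  by_cases hv : v ∈ B
  · rw [thetaCfg_of_mem hv, thetaCfg_of_mem (h hv)]
  · unfold thetaCfg
    split_ifs <;> simp_all

theorem thetaCfg_insert_of_ne {B : Finset (Fin n → Fin m)} {v x : Fin n → Fin m} (hx : x ≠ v) :
    thetaCfg Xs u (insert v B) x = thetaCfg Xs u B x := by
  simp [thetaCfg, hx]

theorem nablaCfg_comp_rootVal_eq_zero {A : Finset (Fin n → Fin m)} {v : Fin n → Fin m}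
    (hv : v ∈ A) (k : ℕ) (h0 : wordVal (thetaCfg Xs u A) (wordDrop v k) = 0) (φ : ℕ → ℝ) :
    nablaCfg Xs u A (fun g => φ (rootVal m n g)) = 0 := by
  have hvanish : ∀ B ⊆ A, wordVal (thetaCfg Xs u B) (wordDrop v k) = 0 := fun B hB =>
    Nat.eq_zero_of_le_zero (h0 ▸ vertexVal_mono _ (thetaCfg_mono hB) _)
  refine sum_powerset_neg_one_pow_card_sub_mul_eq_zero hv _ fun B hB => congrArg φ ?_
  have hBA : B ⊆ A := hB.trans (Finset.erase_subset v A)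
  exact rootVal_eq_of_vertexVal_eq _ (wordDrop v k).2
    (fun x hx => thetaCfg_insert_of_ne fun hxv => hx (hxv ▸ isSuffix_wordDrop v k))
    ((hvanish _ (Finset.insert_subset hv hBA)).trans (hvanish B hBA).symm)

theorem wordVal_thetaCfg_of_mem_sideSet {A : Finset (Fin n → Fin m)} {w : Word m n}
    (hw : w ∈ sideSet A) :
    wordVal (thetaCfg Xs u A) w = wordVal (fun v => if u v then Xs v else 0) w := by
  refine vertexVal_congr _ _ fun x hx => ?_
  have hxA : x ∉ A := fun hxA => (mem_sideSet.mp hw).2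
    (mem_pathSet.mpr ⟨x, hxA, n - w.1, Nat.sub_le _ _, wordDrop_eq_of_isSuffix hx⟩)
  simp [thetaCfg, hxA]

end Theta

theorem theta_root_decomposition_general
    (m : ℕ) (n : ℕ) (i : ℕ)
    (Xs : (Fin n → Fin m) → ℕ)
    (u : (Fin n → Fin m) → Bool)
    (A : Finset (Fin n → Fin m)) (hA : A.Nonempty)
    (hnabla : nablaCfg Xs u A
      (fun g => if rootVal m n g = i then (1 : ℝ) else 0) ≠ 0) :
    (rootVal m n (thetaCfg Xs u A) : ℤ) =
      (∑ w ∈ sideSet A, (wordVal (fun v => if u v then Xs v else 0) w : ℤ)) +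
        (∑ v ∈ A, (Xs v : ℤ)) - (spineSet A).card := by
  have H : ∀ o ∈ spineSet A, 1 ≤ ∑ w ∈ o.children, wordVal (thetaCfg Xs u A) w := by
    intro o ho
    by_contra hlt
    obtain ⟨v, hv, k, -, -, rfl⟩ := mem_spineSet.mp ho
    have h0 : wordVal (thetaCfg Xs u A) (wordDrop v k) = 0 := by
      rw [wordVal_eq_sum_children _ (length_lt_of_mem_spineSet ho)]
      omega
    exact hnabla (nablaCfg_comp_rootVal_eq_zero hv k h0 fun r => if r = i then 1 else 0)
  rw [rootVal_eq_of_one_le_sum_children hA _ H,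
    Finset.sum_congr rfl fun w hw => congrArg Nat.cast (wordVal_thetaCfg_of_mem_sideSet hw),
    Finset.sum_congr rfl fun v hv => congrArg Nat.cast (thetaCfg_of_mem hv)]

/-- Lemma 3.4. On the event `∇^A 1_{X(e_n)=i} ≠ 0`,
`Θ^A X(e_n) = Σ_{v ∈ L_{e_n,A}} X(v) + Σ_{u ∈ A} X_0^*(u) - |O_{e_n,A}|`. -/
theorem theta_root_decomposition
    (m : ℕ) (hm : 2 ≤ m) (n : ℕ) (i : ℕ)
    (Xs : (Fin n → Fin m) → ℕ) (hXs : ∀ v, 1 ≤ Xs v)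
    (u : (Fin n → Fin m) → Bool)
    (A : Finset (Fin n → Fin m)) (hA : A.Nonempty)
    (hnabla : nablaCfg Xs u A
      (fun g => if rootVal m n g = i then (1 : ℝ) else 0) ≠ 0) :
    (rootVal m n (thetaCfg Xs u A) : ℤ) =
      (∑ w ∈ sideSet A, (wordVal (fun v => if u v then Xs v else 0) w : ℤ)) +
        (∑ v ∈ A, (Xs v : ℤ)) - (spineSet A).card :=
  theta_root_decomposition_general m n i Xs u A hA hnabla
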